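/- Defective Delaunay triangles of a maximal independent set have area at most 3√3/2: let S ⊆ ℤ² be a maximal independent set of the triangular lattice, and let u, v, w ∈ S be distinct sites whose embedded images f(u), f(v), f(w) are not collinear. Suppose there exist c ∈ ℝ² and r > 0 with ‖f(u) − c‖ = ‖f(v) − c‖ = ‖f(w) − c‖ = r and ‖f(s) − c‖ ≥ r for every s ∈ S (i.e., the open circumdisk of the triangle contains no point of f(S)). If the triangle f(u)f(v)f(w) is not an equilateral triangle of side length √7, then its area is at most 3√3/2. -/

import Mathlib

/-- Adjacency in the triangular lattice, modeled on `ℤ × ℤ`. -/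
def TriAdj (u v : ℤ × ℤ) : Prop :=
  (u.1 - v.1, u.2 - v.2) ∈
    ({(1, 0), (-1, 0), (0, 1), (0, -1), (1, -1), (-1, 1)} : Finset (ℤ × ℤ))

/-- A set of sites is independent if no two of its elements are adjacent. -/
def IsIndependent (S : Set (ℤ × ℤ)) : Prop :=
  ∀ u ∈ S, ∀ v ∈ S, ¬ TriAdj u v

/-- Maximal independent set of the triangular lattice. -/
def IsMIS (S : Set (ℤ × ℤ)) : Prop :=
  IsIndependent S ∧ ∀ u ∉ S, ∃ v ∈ S, TriAdj u v

/-- Embedding of the triangular lattice into the Euclidean plane (identified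
with `ℂ`): `f(i,j) = i·(1,0) + j·(1/2, √3/2)`. -/
noncomputable def emb (p : ℤ × ℤ) : ℂ :=
  ⟨(p.1 : ℝ) + (p.2 : ℝ) / 2, (p.2 : ℝ) * Real.sqrt 3 / 2⟩

/-- The area of the triangle with vertices `a`, `b`, `c` in the plane `ℂ`. -/
noncomputable def triArea (a b c : ℂ) : ℝ :=
  |((b - a) * (starRingEnd ℂ) (c - a)).im| / 2

/-!
Squared lattice distances are values of the norm form `a² + ab + b²`, and the area of a lattice
triangle is `√3/4 · |D|` for the integer cross product `D`, where Heron's formula expresses `3D²`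
through the squared sides. Independence makes every squared side at least 3. Maximality bounds
the radius of an empty circle: every point of the plane is within `√7/4` of a lattice site,
hence within `1 + √7/4 < 5/3` of a site of `S`. So each squared side is below `4r² < 12`, leaving
the values 3, 4, 7, 9, and their sum is at most `9r² < 25`, because the sum of the squared sides
is at most three times the sum of the squared distances to any point. Among the remaining
triples Heron's formula gives `D² ≤ 36` except for the equilateral triangle of side `√7`.
-/

def triNormSq (p : ℤ × ℤ) : ℤ := p.1 ^ 2 + p.1 * p.2 + p.2 ^ 2

def triCross (p q : ℤ × ℤ) : ℤ := p.1 * q.2 - p.2 * q.1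

theorem sum_norm_sub_sq_le {E : Type*} [NormedAddCommGroup E] [InnerProductSpace ℝ E]
    (x y z c : E) :
    ‖x - y‖ ^ 2 + ‖y - z‖ ^ 2 + ‖x - z‖ ^ 2 ≤ 3 * (‖x - c‖ ^ 2 + ‖y - c‖ ^ 2 + ‖z - c‖ ^ 2) := by
  have key : 3 * (‖x - c‖ ^ 2 + ‖y - c‖ ^ 2 + ‖z - c‖ ^ 2) =
      ‖x - y‖ ^ 2 + ‖y - z‖ ^ 2 + ‖x - z‖ ^ 2 + ‖(x - c) + (y - c) + (z - c)‖ ^ 2 := by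
    have hxy : x - y = (x - c) - (y - c) := by abel
    have hyz : y - z = (y - c) - (z - c) := by abel
    have hxz : x - z = (x - c) - (z - c) := by abel
    rw [hxy, hyz, hxz]
    simp only [norm_sub_sq_real, norm_add_sq_real, inner_add_left]
    ring
  rw [key]
  exact le_add_of_nonneg_right (sq_nonneg _)

theorem emb_sub (p q : ℤ × ℤ) : emb (p - q) = emb p - emb q := by
  apply Complex.ext <;> simp [emb] <;> ring

theorem sq_norm_emb (p : ℤ × ℤ) : ‖emb p‖ ^ 2 = triNormSq p := by
  have h3 : √3 ^ 2 = 3 := Real.sq_sqrt (by norm_num)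
  rw [Complex.sq_norm, Complex.normSq_apply, triNormSq]
  simp only [emb]
  push_cast
  linear_combination ((p.2 : ℝ) ^ 2 / 4) * h3

theorem sq_norm_emb_sub (p q : ℤ × ℤ) : ‖emb p - emb q‖ ^ 2 = triNormSq (p - q) := by
  rw [← emb_sub, sq_norm_emb]

theorem norm_emb_sub (p q : ℤ × ℤ) : ‖emb p - emb q‖ = √(triNormSq (p - q)) := by
  rw [← sq_norm_emb_sub, Real.sqrt_sq (norm_nonneg _)]

theorem im_emb_mul_conj_emb (p q : ℤ × ℤ) :
    (emb p * starRingEnd ℂ (emb q)).im = -(√3 / 2 * triCross p q) := by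
  simp only [Complex.mul_im, Complex.conj_re, Complex.conj_im, emb, triCross]
  push_cast
  ring

theorem triArea_emb (u v w : ℤ × ℤ) :
    triArea (emb u) (emb v) (emb w) = √3 / 4 * |(triCross (v - u) (w - u) : ℝ)| := by
  rw [triArea, ← emb_sub, ← emb_sub, im_emb_mul_conj_emb, abs_neg, abs_mul,
    abs_of_nonneg (by positivity : (0 : ℝ) ≤ √3 / 2)]
  ring

theorem three_mul_sq_triCross (p q : ℤ × ℤ) :
    3 * triCross p q ^ 2 =
      2 * (triNormSq p * triNormSq q + triNormSq q * triNormSq (p - q) +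
        triNormSq (p - q) * triNormSq p) - triNormSq p ^ 2 - triNormSq q ^ 2 -
        triNormSq (p - q) ^ 2 := by
  simp only [triCross, triNormSq, Prod.fst_sub, Prod.snd_sub]
  ring

theorem TriAdj.norm_emb_sub {p q : ℤ × ℤ} (h : TriAdj p q) : ‖emb p - emb q‖ = 1 := by
  have h1 : triNormSq (p - q) = 1 := by
    change p - q ∈ _ at h
    generalize p - q = d at h
    fin_cases h <;> rfl
  rw [← pow_eq_one_iff_of_nonneg (norm_nonneg _) two_ne_zero, sq_norm_emb_sub, h1,
    Int.cast_one]

theorem three_le_triNormSq_sub {p q : ℤ × ℤ} (hpq : p ≠ q) (h : ¬ TriAdj p q) :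
    3 ≤ triNormSq (p - q) := by
  change p - q ∉ _ at h
  rw [← sub_ne_zero] at hpq
  generalize p - q = d at h hpq
  obtain ⟨a, b⟩ := d
  by_contra! hlt
  simp only [triNormSq] at hlt
  have hb : b ^ 2 ≤ 2 := by nlinarith [sq_nonneg (2 * a + b)]
  have ha : (2 * a + b) ^ 2 ≤ 8 := by nlinarith
  have hb1 : -1 ≤ b := by nlinarith
  have hb2 : b ≤ 1 := by nlinarith
  have ha1 : -1 ≤ a := by nlinarith
  have ha2 : a ≤ 1 := by nlinarith
  interval_cases a <;> interval_cases b <;> simp_all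

theorem triNormSq_mem_of_le {d : ℤ × ℤ} (h3 : 3 ≤ triNormSq d) (h11 : triNormSq d ≤ 11) :
    triNormSq d ∈ ({3, 4, 7, 9} : Finset ℤ) := by
  obtain ⟨a, b⟩ := d
  simp only [triNormSq, Finset.mem_insert, Finset.mem_singleton] at *
  have hb : b ^ 2 ≤ 14 := by nlinarith [sq_nonneg (2 * a + b)]
  have ha : (2 * a + b) ^ 2 ≤ 44 := by nlinarith
  have hb1 : -3 ≤ b := by nlinarith
  have hb2 : b ≤ 3 := by nlinarith
  have ha1 : -4 ≤ a := by nlinarith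
  have ha2 : a ≤ 4 := by nlinarith
  interval_cases a <;> interval_cases b <;> omega

theorem exists_sq_norm_emb_sub_le (c : ℂ) : ∃ p : ℤ × ℤ, ‖emb p - c‖ ^ 2 ≤ 7 / 16 := by
  set y := c.im * 2 / √3
  set x := c.re - (round y : ℝ) / 2
  refine ⟨(round x, round y), ?_⟩
  have h3 : √3 ^ 2 = 3 := Real.sq_sqrt (by norm_num)
  have hre : (emb (round x, round y) - c).re = round x - x := by
    simp only [emb, Complex.sub_re, x]
    ring
  have him : (emb (round x, round y) - c).im = √3 / 2 * (round y - y) := by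
    simp only [emb, Complex.sub_im, y]
    field_simp
  have hx : (round x - x) ^ 2 ≤ (1 / 2) ^ 2 := by
    rw [← sq_abs, abs_sub_comm]
    exact pow_le_pow_left₀ (abs_nonneg _) (abs_sub_round x) 2
  have hy : (round y - y) ^ 2 ≤ (1 / 2) ^ 2 := by
    rw [← sq_abs, abs_sub_comm]
    exact pow_le_pow_left₀ (abs_nonneg _) (abs_sub_round y) 2
  rw [Complex.sq_norm, Complex.normSq_apply, hre, him]
  nlinarith

theorem IsMIS.exists_norm_emb_sub_lt {S : Set (ℤ × ℤ)} (hS : IsMIS S) (c : ℂ) :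
    ∃ s ∈ S, ‖emb s - c‖ < 5 / 3 := by
  obtain ⟨p, hp⟩ := exists_sq_norm_emb_sub_le c
  have hpc : ‖emb p - c‖ < 2 / 3 := by nlinarith [norm_nonneg (emb p - c)]
  by_cases hpS : p ∈ S
  · exact ⟨p, hpS, by linarith⟩
  obtain ⟨s, hs, hps⟩ := hS.2 p hpS
  refine ⟨s, hs, ?_⟩
  calc ‖emb s - c‖ ≤ ‖emb s - emb p‖ + ‖emb p - c‖ := norm_sub_le_norm_sub_add_norm_sub _ _ _
    _ < 5 / 3 := by rw [norm_sub_rev, hps.norm_emb_sub]; linarith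

section Cocircular

variable {c : ℂ} {r : ℝ} (hr : r < 5 / 3)
include hr

theorem triNormSq_sub_le_eleven {p q : ℤ × ℤ} (hp : ‖emb p - c‖ = r) (hq : ‖emb q - c‖ = r) :
    triNormSq (p - q) ≤ 11 := by
  have hpq := norm_sub_le_norm_sub_add_norm_sub (emb p) c (emb q)
  rw [hp, norm_sub_rev c, hq] at hpq
  have : (triNormSq (p - q) : ℝ) < 12 := by
    rw [← sq_norm_emb_sub]
    nlinarith [norm_nonneg (emb p - emb q)]
  exact Int.lt_add_one_iff.mp (by exact_mod_cast this)

theorem triNormSq_sub_add_le {u v w : ℤ × ℤ} (hu : ‖emb u - c‖ = r) (hv : ‖emb v - c‖ = r)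
    (hw : ‖emb w - c‖ = r) :
    triNormSq (v - u) + triNormSq (w - u) + triNormSq (v - w) ≤ 24 := by
  have h := sum_norm_sub_sq_le (emb v) (emb u) (emb w) c
  rw [norm_sub_rev (emb u), hu, hv, hw] at h
  simp only [sq_norm_emb_sub] at h
  have hr0 : 0 ≤ r := hu ▸ norm_nonneg _
  have : (triNormSq (v - u) + triNormSq (w - u) + triNormSq (v - w) : ℝ) < 25 := by
    nlinarith
  exact Int.lt_add_one_iff.mp (by exact_mod_cast this)

end Cocircular

theorem sq_le_36_or_all_eq_seven {A B C D : ℤ} (hA : A ∈ ({3, 4, 7, 9} : Finset ℤ))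
    (hB : B ∈ ({3, 4, 7, 9} : Finset ℤ)) (hC : C ∈ ({3, 4, 7, 9} : Finset ℤ))
    (hsum : A + B + C ≤ 24)
    (hD : 3 * D ^ 2 = 2 * (A * B + B * C + C * A) - A ^ 2 - B ^ 2 - C ^ 2) :
    D ^ 2 ≤ 36 ∨ A = 7 ∧ B = 7 ∧ C = 7 := by
  -- The sides 7, 7, 9 give D² = 57, the one value above 36 that is not a square.
  have h57 : D ^ 2 ≠ 57 := fun h => by
    have : D ≤ 7 := by nlinarith
    have : -7 ≤ D := by nlinarith
    interval_cases D <;> norm_num at h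
  simp only [Finset.mem_insert, Finset.mem_singleton] at hA hB hC
  generalize D ^ 2 = t at *
  rcases hA with rfl | rfl | rfl | rfl <;> rcases hB with rfl | rfl | rfl | rfl <;>
    rcases hC with rfl | rfl | rfl | rfl <;> omega

theorem defective_triangle_area_general (S : Set (ℤ × ℤ)) (hS : IsMIS S)
    (u v w : ℤ × ℤ) (hu : u ∈ S) (hv : v ∈ S) (hw : w ∈ S)
    (huv : u ≠ v) (hvw : v ≠ w) (huw : u ≠ w)
    (c : ℂ) (r : ℝ)
    (hcu : ‖emb u - c‖ = r) (hcv : ‖emb v - c‖ = r) (hcw : ‖emb w - c‖ = r)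
    (hdelaunay : ∀ s ∈ S, r ≤ ‖emb s - c‖)
    (hdefective : ¬ (‖emb u - emb v‖ = Real.sqrt 7 ∧ ‖emb v - emb w‖ = Real.sqrt 7 ∧
        ‖emb u - emb w‖ = Real.sqrt 7)) :
    triArea (emb u) (emb v) (emb w) ≤ 3 * Real.sqrt 3 / 2 := by
  obtain ⟨s, hs, hsc⟩ := hS.exists_norm_emb_sub_lt c
  have hr : r < 5 / 3 := (hdelaunay s hs).trans_lt hsc
  have side : ∀ p ∈ S, ∀ q ∈ S, p ≠ q → ‖emb p - c‖ = r → ‖emb q - c‖ = r →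
      triNormSq (p - q) ∈ ({3, 4, 7, 9} : Finset ℤ) := fun p hp q hq hpq hpc hqc =>
    triNormSq_mem_of_le (three_le_triNormSq_sub hpq (hS.1 p hp q hq))
      (triNormSq_sub_le_eleven hr hpc hqc)
  have heron := three_mul_sq_triCross (v - u) (w - u)
  rw [sub_sub_sub_cancel_right] at heron
  rcases sq_le_36_or_all_eq_seven (side v hv u hu huv.symm hcv hcu)
      (side w hw u hu huw.symm hcw hcu) (side v hv w hw hvw hcv hcw)
      (triNormSq_sub_add_le hr hcu hcv hcw) heron with hD | ⟨h7vu, h7wu, h7vw⟩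
  · have hD' : |(triCross (v - u) (w - u) : ℝ)| ≤ 6 :=
      abs_le_of_sq_le_sq (by exact_mod_cast hD) (by norm_num)
    rw [triArea_emb]
    nlinarith [Real.sqrt_nonneg 3]
  · refine absurd ⟨?_, ?_, ?_⟩ hdefective
    · rw [norm_sub_rev, norm_emb_sub, h7vu, Int.cast_ofNat]
    · rw [norm_emb_sub, h7vw, Int.cast_ofNat]
    · rw [norm_sub_rev, norm_emb_sub, h7wu, Int.cast_ofNat]

/-- A defective Delaunay triangle of a maximal independent set of the
triangular lattice has area at most `3√3/2`. -/
theorem defective_triangle_area (S : Set (ℤ × ℤ)) (hS : IsMIS S)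
    (u v w : ℤ × ℤ) (hu : u ∈ S) (hv : v ∈ S) (hw : w ∈ S)
    (huv : u ≠ v) (hvw : v ≠ w) (huw : u ≠ w)
    (hncol : ¬ Collinear ℝ ({emb u, emb v, emb w} : Set ℂ))
    (c : ℂ) (r : ℝ) (hr : 0 < r)
    (hcu : ‖emb u - c‖ = r) (hcv : ‖emb v - c‖ = r) (hcw : ‖emb w - c‖ = r)
    (hdelaunay : ∀ s ∈ S, r ≤ ‖emb s - c‖)
    (hdefective : ¬ (‖emb u - emb v‖ = Real.sqrt 7 ∧ ‖emb v - emb w‖ = Real.sqrt 7 ∧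
        ‖emb u - emb w‖ = Real.sqrt 7)) :
    triArea (emb u) (emb v) (emb w) ≤ 3 * Real.sqrt 3 / 2 :=
  defective_triangle_area_general S hS u v w hu hv hw huv hvw huw c r hcu hcv hcw hdelaunay
    hdefective
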